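/- Adopt the standing setup: Λ a connected row-finite k-graph with no sources, c : Λ → G a cocycle, H_n a descending chain of finite-index normal subgroups with H_1 = G, G_n = G/H_n, c_n(λ) = c(λ)H_n, Λ_n = Λ ×_{c_n} G_n and coverings p_n(λ, g) = (λ, q_n(g)). Then the tower (k+1)-graph T = tgrphlim(Λ_n; p_n) is cofinal if and only if each of the k-graphs Λ_n is cofinal. -/

import Mathlib

open CategoryTheory

attribute [local instance 2000] Preorder.smallCategory

/-- A `k`-graph: a small category `Λ` equipped with a degree functor `d : Λ → ℕᵏ`
satisfying the unique factorisation property.  Morphisms point from the range of a path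
to its source, so that `f ≫ g` corresponds to the composition `fg` of paths in the
`k`-graph literature (with `r (f ≫ g) = r f` and `s (f ≫ g) = s g`). -/
structure KGraph (k : ℕ) (Λ : Type) [SmallCategory Λ] : Type where
  deg : ∀ {a b : Λ}, (a ⟶ b) → Fin k → ℕ
  deg_id : ∀ a : Λ, deg (𝟙 a) = 0
  deg_comp : ∀ {a b c : Λ} (f : a ⟶ b) (g : b ⟶ c), deg (f ≫ g) = deg f + deg g
  factor : ∀ {a b : Λ} (f : a ⟶ b) (m n : Fin k → ℕ), deg f = m + n →
    ∃! t : Σ c : Λ, (a ⟶ c) × (c ⟶ b),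
      deg t.2.1 = m ∧ deg t.2.2 = n ∧ t.2.1 ≫ t.2.2 = f

/-- An infinite path in a `k`-graph: a degree-preserving functor `Ω_k → Λ`, where `Ω_k`
is realised as the preorder category on `ℕᵏ = Fin k → ℕ`; the morphism `(p, q)` (for
`p ≤ q`) is `homOfLE h : p ⟶ q` and must be sent to a path of degree `q - p`.
The range of the path is `P.obj 0`. -/
structure InfPath {k : ℕ} {Λ : Type} [SmallCategory Λ] (KG : KGraph k Λ) : Type where
  P : (Fin k → ℕ) ⥤ Λ
  deg_eq : ∀ {p q : Fin k → ℕ} (h : p ≤ q), KG.deg (P.map (homOfLE h)) = q - p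

/-- Translation by `n` on `ℕᵏ`, as a functor. -/
def transFunctor (k : ℕ) (n : Fin k → ℕ) : (Fin k → ℕ) ⥤ (Fin k → ℕ) where
  obj p := p + n
  map f := homOfLE (add_le_add (leOfHom f) (le_refl n))
  map_id _ := rfl
  map_comp _ _ := rfl

/-- The shift `σⁿ x` of an infinite path `x`, satisfying `σⁿ x (p, q) = x (p + n, q + n)`. -/
def InfPath.shift {k : ℕ} {Λ : Type} [SmallCategory Λ] {KG : KGraph k Λ}
    (x : InfPath KG) (n : Fin k → ℕ) : InfPath KG where
  P := transFunctor k n ⋙ x.P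
  deg_eq {p q} h := by
    have h1 : (transFunctor k n ⋙ x.P).map (homOfLE h)
        = x.P.map (homOfLE (add_le_add h (le_refl n))) := rfl
    rw [h1]
    refine (x.deg_eq _).trans ?_
    funext i
    simp only [Pi.sub_apply, Pi.add_apply]
    omega

/-- A cocycle on a `k`-graph: a functor `c : Λ → G` into a group `G` (viewed as a category
with one object).  With our orientation of arrows, `c (f ≫ g) = c f * c g`. -/
structure Cocycle (Λ : Type) [SmallCategory Λ] (G : Type) [Group G] : Type where
  c : ∀ {a b : Λ}, (a ⟶ b) → G
  map_id : ∀ a : Λ, c (𝟙 a) = 1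
  map_comp : ∀ {a b d : Λ} (f : a ⟶ b) (g : b ⟶ d), c (f ≫ g) = c f * c g

/-- The skew product `Λ ×_c G`: vertices are pairs `(v, g)`, and `(λ, g)` is a path with
source `(s λ, g)` and range `(r λ, c(λ) g)`.  Here a morphism from `(a, h)` to `(b, g)` is
a path `f : a ⟶ b` with `c f * g = h`. -/
structure Skew {Λ : Type} [SmallCategory Λ] {G : Type} [Group G] (σ : Cocycle Λ G) : Type where
  base : Λ
  grp : G

instance Skew.instCategory {Λ : Type} [SmallCategory Λ] {G : Type} [Group G]
    (σ : Cocycle Λ G) : SmallCategory (Skew σ) where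
  Hom a b := {f : a.base ⟶ b.base // σ.c f * b.grp = a.grp}
  id a := ⟨𝟙 a.base, by rw [σ.map_id, one_mul]⟩
  comp f g := ⟨f.1 ≫ g.1, by rw [σ.map_comp, mul_assoc, g.2, f.2]⟩
  id_comp f := by apply Subtype.ext; exact Category.id_comp f.1
  comp_id f := by apply Subtype.ext; exact Category.comp_id f.1
  assoc f g h := by apply Subtype.ext; exact Category.assoc f.1 g.1 h.1

/-- The `k`-graph structure on the skew product `Λ ×_c G`. -/
def skewKGraph {k : ℕ} {Λ : Type} [SmallCategory Λ] (KG : KGraph k Λ) {G : Type} [Group G]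
    (σ : Cocycle Λ G) : KGraph k (Skew σ) where
  deg f := KG.deg f.1
  deg_id a := KG.deg_id a.base
  deg_comp f g := KG.deg_comp f.1 g.1
  factor := by
    rintro a b f m n hmn
    obtain ⟨⟨c0, g0, h0⟩, ⟨hgm, hhn, hgh⟩, huniq⟩ := KG.factor f.1 m n hmn
    refine ⟨⟨⟨c0, (σ.c g0)⁻¹ * a.grp⟩, ⟨g0, mul_inv_cancel_left _ _⟩, ⟨h0, ?_⟩⟩,
      ⟨hgm, hhn, Subtype.ext hgh⟩, ?_⟩
    · rw [← f.2, ← hgh, σ.map_comp, mul_assoc, inv_mul_cancel_left]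
    · rintro ⟨⟨c1, x1⟩, ⟨g1, hg1⟩, ⟨h1, hh1⟩⟩ ⟨hm1, hn1, hcomp1⟩
      have hbase : (⟨c0, g0, h0⟩ : Σ c : Λ, (a.base ⟶ c) × (c ⟶ b.base)) = ⟨c1, g1, h1⟩ :=
        (huniq ⟨c1, g1, h1⟩ ⟨hm1, hn1, congrArg Subtype.val hcomp1⟩).symm
      obtain ⟨h1', h2'⟩ := Sigma.mk.inj_iff.mp hbase
      subst h1'
      obtain ⟨h3', h4'⟩ := Prod.mk.inj (eq_of_heq h2')
      subst h3'
      subst h4'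
      have hx : x1 = (σ.c g0)⁻¹ * a.grp := by rw [← hg1, inv_mul_cancel_left]
      subst hx
      rfl

/-- For `m ≤ n` and a descending chain `H` of normal subgroups, the canonical map
`G/Hₙ → G/Hₘ` (the map `q_{m,n}` induced by the projections `qᵢ`). -/
def quotDown {G : Type} [Group G] {H : ℕ → Subgroup G} [∀ i, (H i).Normal]
    (hH : Antitone H) {m n : ℕ} (h : m ≤ n) : G ⧸ H n →* G ⧸ H m :=
  QuotientGroup.map _ _ (MonoidHom.id G) (fun _ hx => hH h hx)

lemma quotDown_mk {G : Type} [Group G] {H : ℕ → Subgroup G} [∀ i, (H i).Normal]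
    (hH : Antitone H) {m n : ℕ} (h : m ≤ n) (g : G) :
    quotDown hH h (g : G ⧸ H n) = (g : G ⧸ H m) := rfl

lemma quotDown_refl {G : Type} [Group G] {H : ℕ → Subgroup G} [∀ i, (H i).Normal]
    (hH : Antitone H) (n : ℕ) (z : G ⧸ H n) : quotDown hH (le_refl n) z = z := by
  induction z using QuotientGroup.induction_on with
  | _ g => rfl

lemma quotDown_comp {G : Type} [Group G] {H : ℕ → Subgroup G} [∀ i, (H i).Normal]
    (hH : Antitone H) {l m n : ℕ} (h1 : l ≤ m) (h2 : m ≤ n) (z : G ⧸ H n) :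
    quotDown hH h1 (quotDown hH h2 z) = quotDown hH (h1.trans h2) z := by
  induction z using QuotientGroup.induction_on with
  | _ g => rfl

/-- Total version of `quotDown` (junk value `1` when `m > n`). -/
def qd {G : Type} [Group G] {H : ℕ → Subgroup G} [∀ i, (H i).Normal]
    (hH : Antitone H) (m n : ℕ) (z : G ⧸ H n) : G ⧸ H m :=
  if h : m ≤ n then quotDown hH h z else 1

/-- The tower `(k+1)`-graph `T = tgrphlim (Λₙ; pₙ)` of [KPS] for the system of
skew-product coverings `pₙ : Λ ×_{c_{n+1}} G/H_{n+1} → Λ ×_{c_n} G/Hₙ`.  Its vertices are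
the disjoint union of the vertices `(v, gHₙ)` of the skew products `Λₙ = Λ ×_{c_n} G/Hₙ`;
a morphism of degree `(m, j)` from a level-`n` vertex is a path `λ ∈ Λₙ^m` together with a
vertex `w` of `Λ_{n+j}` lying over its source.  (Here such a morphism from `(n, v, g)` to
`(n', v', g')` is encoded as a path `f : v ⟶ v'` of `Λ` such that `n ≤ n'` and
`c_n(f)·q_{n,n'}(g') = g` in `G/Hₙ`.) -/
structure TObj {Λ : Type} [SmallCategory Λ] {G : Type} [Group G] {H : ℕ → Subgroup G}
    [∀ i, (H i).Normal] (c : Cocycle Λ G) (hH : Antitone H) : Type where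
  lvl : ℕ
  vert : Λ
  grp : G ⧸ H lvl

instance TObj.instCategory {Λ : Type} [SmallCategory Λ] {G : Type} [Group G]
    {H : ℕ → Subgroup G} [∀ i, (H i).Normal] (c : Cocycle Λ G) (hH : Antitone H) :
    SmallCategory (TObj c hH) where
  Hom a b := {f : a.vert ⟶ b.vert //
    a.lvl ≤ b.lvl ∧ (↑(c.c f) : G ⧸ H a.lvl) * qd hH a.lvl b.lvl b.grp = a.grp}
  id a := ⟨𝟙 a.vert, le_rfl, by
    rw [c.map_id, qd, dif_pos le_rfl, quotDown_refl]
    exact one_mul a.grp⟩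
  comp {a b c'} f g := ⟨f.1 ≫ g.1, f.2.1.trans g.2.1, by
    obtain ⟨hab, hf⟩ := f.2
    obtain ⟨hbc, hg⟩ := g.2
    simp only [qd, dif_pos hbc] at hg
    simp only [qd, dif_pos hab] at hf
    simp only [qd, dif_pos (hab.trans hbc)]
    have h1 := congrArg (quotDown hH hab) hg
    rw [map_mul, quotDown_mk, quotDown_comp] at h1
    rw [c.map_comp]
    calc (↑(c.c f.1 * c.c g.1) : G ⧸ H a.lvl) * quotDown hH (hab.trans hbc) c'.grp
        = ↑(c.c f.1) * (↑(c.c g.1) * quotDown hH (hab.trans hbc) c'.grp) := by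
          rw [QuotientGroup.mk_mul, mul_assoc]
      _ = ↑(c.c f.1) * quotDown hH hab b.grp := by rw [h1]
      _ = a.grp := hf⟩
  id_comp f := by apply Subtype.ext; exact Category.id_comp f.1
  comp_id f := by apply Subtype.ext; exact Category.comp_id f.1
  assoc f g h := by apply Subtype.ext; exact Category.assoc f.1 g.1 h.1

/-- The `(k+1)`-graph structure on the tower graph: the degree of a morphism is
`(d(λ), j)` where `j` is the level difference. -/
def towerKG {k : ℕ} {Λ : Type} [SmallCategory Λ] (KG : KGraph k Λ) {G : Type} [Group G]
    {H : ℕ → Subgroup G} [∀ i, (H i).Normal] (c : Cocycle Λ G) (hH : Antitone H) :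
    KGraph (k + 1) (TObj c hH) where
  deg {a b} f := Fin.snoc (KG.deg f.1) (b.lvl - a.lvl)
  deg_id a := by
    funext i
    refine Fin.lastCases ?_ (fun i => ?_) i
    · simp [Fin.snoc]
    · have h0 : (𝟙 a : a ⟶ a).1 = 𝟙 a.vert := rfl
      have : KG.deg (𝟙 a.vert) = 0 := KG.deg_id a.vert
      simp [Fin.snoc, h0, this]
  deg_comp {a b c'} f g := by
    funext i
    refine Fin.lastCases ?_ (fun i => ?_) i
    · have h1 := f.2.1
      have h2 := g.2.1
      simp only [Fin.snoc_last, Pi.add_apply]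
      omega
    · have h0 : (f ≫ g : a ⟶ c').1 = f.1 ≫ g.1 := rfl
      have : KG.deg (f.1 ≫ g.1) = KG.deg f.1 + KG.deg g.1 := KG.deg_comp f.1 g.1
      simp [Fin.snoc, h0, this]
  factor := by
    rintro a b f m n hmn
    have hble := f.2.1
    have hcond := f.2.2
    have hhead : KG.deg f.1 = (fun i => m (Fin.castSucc i)) + (fun i => n (Fin.castSucc i)) := by
      funext i
      have h := congrFun hmn (Fin.castSucc i)
      simpa [Fin.snoc] using h
    have hlast : b.lvl - a.lvl = m (Fin.last k) + n (Fin.last k) := by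
      have h := congrFun hmn (Fin.last k)
      simpa [Fin.snoc] using h
    obtain ⟨⟨c0, g0, h0⟩, ⟨hg, hh, hgh⟩, uniq⟩ :=
      KG.factor f.1 (fun i => m (Fin.castSucc i)) (fun i => n (Fin.castSucc i)) hhead
    have hmidle : a.lvl + m (Fin.last k) ≤ b.lvl := by omega
    refine ⟨⟨⟨a.lvl + m (Fin.last k), c0,
        ↑(c.c h0) * qd hH (a.lvl + m (Fin.last k)) b.lvl b.grp⟩,
        ⟨g0, Nat.le_add_right _ _, ?_⟩, ⟨h0, hmidle, rfl⟩⟩,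
      ⟨?_, ?_, Subtype.ext hgh⟩, ?_⟩
    · simp only [qd, dif_pos (Nat.le_add_right a.lvl (m (Fin.last k))), dif_pos hmidle,
        dif_pos hble]
      rw [map_mul, quotDown_mk, quotDown_comp]
      rw [← mul_assoc, ← QuotientGroup.mk_mul, ← c.map_comp, hgh]
      simp only [qd, dif_pos hble] at hcond
      exact hcond
    · funext i
      refine Fin.lastCases ?_ (fun i => ?_) i
      · simp only [Fin.snoc_last]
        omega
      · have h := congrFun hg i
        simpa [Fin.snoc] using h
    · funext i
      refine Fin.lastCases ?_ (fun i => ?_) i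
      · simp only [Fin.snoc_last]
        omega
      · have h := congrFun hh i
        simpa [Fin.snoc] using h
    · rintro ⟨⟨L, V, Z⟩, ⟨g1, hle1, hc1⟩, ⟨h1, hle2, hc2⟩⟩ ⟨dm, dn, dcomp⟩
      dsimp only at hle1 hle2 hc1 hc2 dm dn
      have hcompval : g1 ≫ h1 = f.1 := congrArg Subtype.val dcomp
      have hdg1 : KG.deg g1 = fun i => m (Fin.castSucc i) := by
        funext i
        have h := congrFun dm (Fin.castSucc i)
        simpa [Fin.snoc] using h
      have hdh1 : KG.deg h1 = fun i => n (Fin.castSucc i) := by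
        funext i
        have h := congrFun dn (Fin.castSucc i)
        simpa [Fin.snoc] using h
      have hLm : L - a.lvl = m (Fin.last k) := by
        have h := congrFun dm (Fin.last k)
        simpa [Fin.snoc] using h
      have hL : L = a.lvl + m (Fin.last k) := by omega
      subst hL
      have hbase : (⟨c0, g0, h0⟩ : Σ c' : Λ, (a.vert ⟶ c') × (c' ⟶ b.vert)) = ⟨V, g1, h1⟩ :=
        (uniq ⟨V, g1, h1⟩ ⟨hdg1, hdh1, hcompval⟩).symm
      obtain ⟨h1', h2'⟩ := Sigma.mk.inj_iff.mp hbase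
      subst h1'
      obtain ⟨h3', h4'⟩ := Prod.mk.inj (eq_of_heq h2')
      subst h3'
      subst h4'
      have hZ : Z = ↑(c.c h0) * qd hH (a.lvl + m (Fin.last k)) b.lvl b.grp := hc2.symm
      subst hZ
      rfl

/-- The induced cocycle `c_N : Λ → G/N`, `c_N(λ) = c(λ)N`. -/
def cq {Λ : Type} [SmallCategory Λ] {G : Type} [Group G] (c : Cocycle Λ G)
    (N : Subgroup G) [N.Normal] : Cocycle Λ (G ⧸ N) where
  c f := ↑(c.c f)
  map_id a := by
    show ((c.c (𝟙 a) : G) : G ⧸ N) = 1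
    rw [c.map_id]; rfl
  map_comp f g := by
    show ((c.c (f ≫ g) : G) : G ⧸ N) = ↑(c.c f) * ↑(c.c g)
    rw [c.map_comp]; rfl

/-- A row-finite `k`-graph with no sources is cofinal if for every vertex `v` and every
infinite path `x` there is `n ∈ ℕᵏ` with `vΛx(n) ≠ ∅`. -/
def Cofinal {k : ℕ} {Λ : Type} [SmallCategory Λ] (KG : KGraph k Λ) : Prop :=
  ∀ (v : Λ) (x : InfPath KG), ∃ n : Fin k → ℕ, Nonempty (v ⟶ x.P.obj n)

/-!
An infinite path `x` of `Λₙ` lifts to `Λ ×_c G`, and reducing the lift modulo every `H_{n+j}`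
gives an infinite path of `T` whose row at height `j` lies over `x`; a path of `T` from a
level-`n` vertex to this tower path projects to a path of `Λₙ` ending on `x`. Conversely, the
row at height `j` of an infinite path of `T`, reduced modulo `Hⱼ`, is an infinite path of `Λⱼ`
(its vertices sit at levels `≥ j`), and a path of `Λⱼ` from a level-`j` vertex to it is
literally a path of `T`.
-/

section TowerCofinal

variable {k : ℕ} {Λ : Type} [SmallCategory Λ] {KG : KGraph k Λ} {G : Type} [Group G]
  {c : Cocycle Λ G} {H : ℕ → Subgroup G} [∀ i, (H i).Normal]

lemma Fin.snoc_le_snoc {α : Type*} [Preorder α] {p q : Fin k → α} {j j' : α} (hpq : p ≤ q)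
    (hj : j ≤ j') : (Fin.snoc p j : Fin (k + 1) → α) ≤ Fin.snoc q j' := fun i => by
  induction i using Fin.lastCases with
  | last => simpa using hj
  | cast i => simpa using hpq i

lemma Fin.init_mono {α : Type*} [Preorder α] {P Q : Fin (k + 1) → α} (h : P ≤ Q) :
    Fin.init P ≤ Fin.init Q :=
  fun i => h i.castSucc

lemma qd_of_le (hH : Antitone H) {m n : ℕ} (h : m ≤ n) (z : G ⧸ H n) :
    qd hH m n z = quotDown hH h z :=
  dif_pos h

lemma qd_mk (hH : Antitone H) {m n : ℕ} (h : m ≤ n) (g : G) :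
    qd hH m n (g : G ⧸ H n) = (g : G ⧸ H m) :=
  qd_of_le hH h _

lemma towerKG_deg_last {hH : Antitone H} {a b : TObj c hH} (f : a ⟶ b) :
    (towerKG KG c hH).deg f (Fin.last k) = b.lvl - a.lvl :=
  Fin.snoc_last (α := fun _ => ℕ) _ _

lemma towerKG_deg_castSucc {hH : Antitone H} {a b : TObj c hH} (f : a ⟶ b) (i : Fin k) :
    (towerKG KG c hH).deg f i.castSucc = KG.deg f.1 i :=
  Fin.snoc_castSucc (α := fun _ => ℕ) _ _ _

/-- A morphism of the tower graph still satisfies its defining relation after projecting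
to any level `N` below its range. -/
lemma TObj.cocycle_mul_qd_eq {hH : Antitone H} {a b : TObj c hH} (f : a ⟶ b) {N : ℕ}
    (hN : N ≤ a.lvl) : (c.c f.1 : G ⧸ H N) * qd hH N b.lvl b.grp = qd hH N a.lvl a.grp := by
  obtain ⟨φ, hab, hφ⟩ := f
  have h := congrArg (quotDown hH hN) hφ
  rw [qd_of_le hH hab, map_mul, quotDown_mk, quotDown_comp] at h
  rw [qd_of_le hH (hN.trans hab), qd_of_le hH hN]
  exact h

def InfPath.lift {N : Subgroup G} [N.Normal] (x : InfPath (skewKGraph KG (cq c N))) (g : G) :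
    InfPath (skewKGraph KG c) where
  P :=
    { obj := fun p =>
        ⟨(x.P.obj p).base, (c.c (x.P.map (homOfLE (zero_le (a := p)))).1)⁻¹ * g⟩
      map := fun {p q} f => ⟨(x.P.map f).1, by
        have hcomp : (x.P.map (homOfLE (zero_le (a := q)))).1
            = (x.P.map (homOfLE (zero_le (a := p)))).1 ≫ (x.P.map f).1 :=
          congrArg Subtype.val (x.P.map_comp (homOfLE (zero_le (a := p))) f)
        rw [hcomp, c.map_comp]
        group⟩
      map_id := fun p => Subtype.ext (congrArg Subtype.val (x.P.map_id p) :)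
      map_comp := fun f g => Subtype.ext (congrArg Subtype.val (x.P.map_comp f g) :) }
  deg_eq h := x.deg_eq h

lemma InfPath.lift_obj_grp {N : Subgroup G} [N.Normal] (x : InfPath (skewKGraph KG (cq c N)))
    {g : G} (hg : (g : G ⧸ N) = (x.P.obj 0).grp) (p : Fin k → ℕ) :
    (((x.lift g).P.obj p).grp : G ⧸ N) = (x.P.obj p).grp := by
  have h : (c.c (x.P.map (homOfLE (zero_le (a := p)))).1 : G ⧸ N) * (x.P.obj p).grp = g :=
    (x.P.map (homOfLE (zero_le (a := p)))).2.trans hg.symm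
  rw [eq_inv_mul_of_mul_eq h]
  rfl

/-- The tower path whose row at height `j` is the image in `Λ_{n+j}` of a path of `Λ ×_c G`. -/
def InfPath.toTower (hH : Antitone H) (y : InfPath (skewKGraph KG c)) (n : ℕ) :
    InfPath (towerKG KG c hH) where
  P :=
    { obj := fun P => ⟨n + P (Fin.last k), (y.P.obj (Fin.init P)).base,
        (y.P.obj (Fin.init P)).grp⟩
      map := fun {P Q} f => ⟨(y.P.map (homOfLE (Fin.init_mono (leOfHom f)))).1,
        Nat.add_le_add_left (leOfHom f (Fin.last k)) n, by
          rw [qd_mk hH (Nat.add_le_add_left (leOfHom f (Fin.last k)) n), ← QuotientGroup.mk_mul,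
            (y.P.map (homOfLE (Fin.init_mono (leOfHom f)))).2]⟩
      map_id := fun P => Subtype.ext (congrArg Subtype.val (y.P.map_id (Fin.init P)) :)
      map_comp := fun f g => Subtype.ext (congrArg Subtype.val (y.P.map_comp
          (homOfLE (Fin.init_mono (leOfHom f))) (homOfLE (Fin.init_mono (leOfHom g)))) :) }
  deg_eq {P Q} h := by
    funext i
    induction i using Fin.lastCases with
    | last =>
      rw [towerKG_deg_last]
      simp only [Pi.sub_apply]
      omega
    | cast i =>
      rw [towerKG_deg_castSucc]
      exact congrFun (y.deg_eq (Fin.init_mono h)) i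

lemma InfPath.lvl_obj {hH : Antitone H} (X : InfPath (towerKG KG c hH))
    (P : Fin (k + 1) → ℕ) : (X.P.obj P).lvl = (X.P.obj 0).lvl + P (Fin.last k) := by
  have hle := (X.P.map (homOfLE (zero_le (a := P)))).2.1
  have hdeg := congrFun (X.deg_eq (zero_le (a := P))) (Fin.last k)
  rw [towerKG_deg_last] at hdeg
  simp only [Pi.sub_apply, Pi.zero_apply, Nat.sub_zero] at hdeg
  omega

lemma InfPath.le_lvl_obj_snoc {hH : Antitone H} (X : InfPath (towerKG KG c hH))
    (p : Fin k → ℕ) (j : ℕ) : j ≤ (X.P.obj (Fin.snoc p j)).lvl := by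
  rw [X.lvl_obj, Fin.snoc_last]
  exact Nat.le_add_left j _

/-- The row of a tower path at height `j`, projected down to `Λ_j`. -/
def InfPath.slice {hH : Antitone H} (X : InfPath (towerKG KG c hH)) (j : ℕ) :
    InfPath (skewKGraph KG (cq c (H j))) where
  P :=
    { obj := fun p => ⟨(X.P.obj (Fin.snoc p j)).vert,
        qd hH j (X.P.obj (Fin.snoc p j)).lvl (X.P.obj (Fin.snoc p j)).grp⟩
      map := fun {p q} f =>
        ⟨(X.P.map (homOfLE (Fin.snoc_le_snoc (leOfHom f) le_rfl))).1,
          TObj.cocycle_mul_qd_eq _ (X.le_lvl_obj_snoc p j)⟩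
      map_id := fun p => Subtype.ext (congrArg Subtype.val (X.P.map_id (Fin.snoc p j)) :)
      map_comp := fun f g => Subtype.ext (congrArg Subtype.val (X.P.map_comp
          (homOfLE (Fin.snoc_le_snoc (leOfHom f) le_rfl))
          (homOfLE (Fin.snoc_le_snoc (leOfHom g) le_rfl))) :) }
  deg_eq {p q} h := by
    funext i
    have hdeg := congrFun (X.deg_eq (Fin.snoc_le_snoc h (le_refl j))) i.castSucc
    rw [towerKG_deg_castSucc] at hdeg
    simp only [Pi.sub_apply, Fin.snoc_castSucc] at hdeg
    exact hdeg

theorem cofinal_skew_of_cofinal_tower (hH : Antitone H) (hT : Cofinal (towerKG KG c hH))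
    (n : ℕ) : Cofinal (skewKGraph KG (cq c (H n))) := by
  intro v x
  obtain ⟨g, hg⟩ := QuotientGroup.mk_surjective (x.P.obj 0).grp
  obtain ⟨m, ⟨f⟩⟩ := hT ⟨n, v.base, v.grp⟩ ((x.lift g).toTower hH n)
  have hf : (c.c f.1 : G ⧸ H n) * qd hH n (n + m (Fin.last k))
      (((x.lift g).P.obj (Fin.init m)).grp : G ⧸ H (n + m (Fin.last k))) = v.grp := f.2.2
  rw [qd_mk hH (Nat.le_add_right _ _), x.lift_obj_grp hg] at hf
  exact ⟨Fin.init m, ⟨⟨f.1, hf⟩⟩⟩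

theorem cofinal_tower_of_forall_cofinal_skew (hH : Antitone H)
    (hΛ : ∀ n, Cofinal (skewKGraph KG (cq c (H n)))) : Cofinal (towerKG KG c hH) := by
  intro w X
  obtain ⟨m, ⟨f⟩⟩ := hΛ w.lvl ⟨w.vert, w.grp⟩ (X.slice w.lvl)
  exact ⟨Fin.snoc m w.lvl, ⟨⟨f.1, X.le_lvl_obj_snoc m w.lvl, f.2⟩⟩⟩

end TowerCofinal

theorem stmt13_general {k : ℕ} {Λ : Type} [SmallCategory Λ] (KG : KGraph k Λ)
    {G : Type} [Group G] (c : Cocycle Λ G)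
    (H : ℕ → Subgroup G) [∀ i, (H i).Normal] (hH : Antitone H) :
    Cofinal (towerKG KG c hH) ↔ ∀ n : ℕ, Cofinal (skewKGraph KG (cq c (H n))) :=
  ⟨cofinal_skew_of_cofinal_tower hH, cofinal_tower_of_forall_cofinal_skew hH⟩

/-- Standing setup: `Λ` a connected row-finite `k`-graph with no sources,
`c : Λ → G` a cocycle, `(Hₙ)` a descending chain of finite-index normal subgroups with
`H₀ = G`, `Gₙ = G/Hₙ`, `cₙ(λ) = c(λ)Hₙ`, `Λₙ = Λ ×_{cₙ} Gₙ` and coverings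
`pₙ(λ, g) = (λ, qₙ(g))`.  Then the tower `(k+1)`-graph `T = tgrphlim (Λₙ; pₙ)` is
cofinal if and only if each skew product `Λₙ` is cofinal. -/
theorem stmt13 {k : ℕ} {Λ : Type} [SmallCategory Λ] (KG : KGraph k Λ)
    [IsConnected Λ]
    (hrow : ∀ (v : Λ) (d : Fin k → ℕ), Finite ((b : Λ) × {f : v ⟶ b // KG.deg f = d}))
    (hns : ∀ (v : Λ) (d : Fin k → ℕ), ∃ (b : Λ) (f : v ⟶ b), KG.deg f = d)
    {G : Type} [Group G] (c : Cocycle Λ G)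
    (H : ℕ → Subgroup G) [∀ i, (H i).Normal] (hH : Antitone H)
    (hfin : ∀ i, (H i).FiniteIndex) (hH0 : H 0 = ⊤) :
    Cofinal (towerKG KG c hH) ↔ ∀ n : ℕ, Cofinal (skewKGraph KG (cq c (H n))) :=
  stmt13_general KG c H hH
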